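/- arXiv:1505.07437 — 2 statements merged into one kernel-verified Lean document; each statement's English description precedes it below -/
import Mathlib

section
/- Let k ≥ 2 be an integer and let T = T_k be the unique formal power series over ℚ with constant coefficient 0 satisfying T = X + T^k/k!. Then for every nonnegative integer s, setting n = s(k−1)+1, the coefficient of X^n in T equals (1/(s(k−1)+1)) · C(ks, s) · (1/k!)^s. Equivalently, the number t_{k,n} = n! · [X^n]T of k-phylogenetic trees on leaf set [n] equals (n!/(s(k−1)+1)) · C(ks, s) / k!^s. -/
/-!
Expanding `T ^ m = (X + a T ^ k) ^ m` binomially, the coefficient of `X ^ (s * (k - 1) + m)` in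
`T ^ m` is a sum over `i + j = s` of `a ^ i * C(m, i)` times the coefficient of
`X ^ (j * (k - 1) + k * i)` in `T ^ (k * i)`; the terms with `i > s` vanish because `T ^ (k * i)`
has order at least `k * i`. Since `j < s` whenever `i > 0`, this determines the coefficients by
strong induction on `s`. The Raney numbers `m / (m + k s) * C(m + k s, s)` satisfy the same
recursion, which after `i * C(m, i) = m * C(m - 1, i - 1)` is Vandermonde's identity.
-/

open PowerSeries Finset

/-- At `m = s = 0` this is `0`, whereas `T ^ 0 = 1` has coefficient `1` there. -/
def raney (k m s : ℕ) : ℚ := m / (m + k * s) * ((m + k * s).choose s : ℕ)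

@[simp]
theorem raney_zero_left (k s : ℕ) : raney k 0 s = 0 := by simp [raney]

theorem raney_zero_right (k : ℕ) {m : ℕ} (hm : m ≠ 0) : raney k m 0 = 1 := by
  simp [raney, hm]

theorem raney_mul_left {k : ℕ} (hk : k ≠ 0) (i j : ℕ) :
    raney k (k * i) j = i / (i + j : ℕ) * ((k * (i + j)).choose j : ℕ) := by
  rw [raney, mul_add]
  push_cast
  rw [← mul_add, mul_div_mul_left _ _ (by exact_mod_cast hk)]

theorem raney_one {k : ℕ} (hk : k ≠ 0) (s : ℕ) :
    raney k 1 s = 1 / ((s : ℚ) * (k - 1) + 1) * ((k * s).choose s : ℕ) := by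
  have hs : s ≤ k * s := Nat.le_mul_of_pos_left s (Nat.pos_of_ne_zero hk)
  have hnat := Nat.choose_mul_succ_eq (k * s) s
  rw [Nat.sub_add_comm hs] at hnat
  have h := congrArg (Nat.cast : ℕ → ℚ) hnat
  push_cast [Nat.cast_sub hs] at h
  have hk1 : (1 : ℚ) ≤ k := by exact_mod_cast Nat.one_le_iff_ne_zero.2 hk
  rw [raney, add_comm 1 (k * s)]
  push_cast
  rw [div_mul_eq_mul_div, div_mul_eq_mul_div, div_eq_div_iff (by positivity) (by nlinarith)]
  linear_combination -h

theorem raney_eq_ite_add_sum_antidiagonal {k m : ℕ} (hk : k ≠ 0) (hm : m ≠ 0) (s : ℕ) :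
    raney k m s = (if s = 0 then 1 else 0) +
      ∑ p ∈ antidiagonal s, (m.choose p.1 : ℚ) * raney k (k * p.1) p.2 := by
  rcases s with _ | t
  · simp [raney_zero_right k hm]
  obtain ⟨M, rfl⟩ := Nat.exists_eq_add_one_of_ne_zero hm
  have hterm : ∀ p ∈ antidiagonal t, ((M + 1).choose (p.1 + 1) : ℚ) * raney k (k * (p.1 + 1)) p.2
      = (M + 1) / (t + 1) * ((M.choose p.1 * (k * (t + 1)).choose p.2 : ℕ) : ℚ) := by
    rintro p hp
    rw [HasAntidiagonal.mem_antidiagonal] at hp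
    rw [raney_mul_left hk, show p.1 + 1 + p.2 = t + 1 by omega]
    have h' : ((M + 1 : ℕ) : ℚ) * M.choose p.1 = (M + 1).choose (p.1 + 1) * (p.1 + 1 : ℕ) := by
      exact_mod_cast Nat.add_one_mul_choose_eq M p.1
    push_cast at h' ⊢
    linear_combination (-((k * (t + 1)).choose p.2 : ℚ) / (t + 1)) * h'
  rw [Finset.Nat.sum_antidiagonal_succ, sum_congr rfl hterm, ← mul_sum, ← Nat.cast_sum,
    ← Nat.add_choose_eq, raney, add_right_comm M 1]
  simp only [raney_zero_left, mul_zero, zero_add, add_eq_zero, one_ne_zero, and_false, if_false]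
  have hN := congrArg (Nat.cast : ℕ → ℚ) (Nat.add_one_mul_choose_eq (M + k * (t + 1)) t)
  push_cast at hN ⊢
  field_simp
  linear_combination -hN

theorem Finset.sum_range_succ_eq_sum_range_succ_of_eq_zero {M : Type*} [AddCommMonoid M]
    {f : ℕ → M} {m s : ℕ}
    (hm : ∀ i, m < i → f i = 0) (hs : ∀ i, s < i → f i = 0) :
    ∑ i ∈ range (m + 1), f i = ∑ i ∈ range (s + 1), f i := by
  wlog h : m ≤ s generalizing m s
  · exact (this hs hm (by omega)).symm
  exact sum_subset (range_subset_range.2 (by omega)) fun i hi hi' ↦ hm i (by simp at hi hi'; omega)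

section
variable {R : Type*} [CommSemiring R]

theorem PowerSeries.coeff_pow_eq_zero_of_lt {T : R⟦X⟧} (hT0 : constantCoeff T = 0) {n m : ℕ}
    (h : n < m) : coeff n (T ^ m) = 0 :=
  coeff_of_lt_order _ ((Nat.cast_lt.2 h).trans_le (le_order_pow_of_constantCoeff_eq_zero m hT0))

theorem PowerSeries.coeff_X_add_C_mul_pow (a : R) (U : R⟦X⟧) (n m : ℕ) :
    coeff (n + m) ((X + C a * U) ^ m) =
      ∑ i ∈ range (m + 1), a ^ i * m.choose i * coeff (n + i) (U ^ i) := by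
  rw [add_comm X, add_pow, map_sum]
  refine sum_congr rfl fun i hi ↦ ?_
  have him : i ≤ m := Nat.lt_succ_iff.1 (mem_range.1 hi)
  have hterm : (C a * U) ^ i * X ^ (m - i) * (m.choose i : R⟦X⟧) =
      C (a ^ i * m.choose i) * U ^ i * X ^ (m - i) := by
    rw [map_mul, map_pow, map_natCast]
    ring
  rw [hterm, coeff_mul_X_pow', if_pos (by omega), coeff_C_mul,
    show n + m - (m - i) = n + i by omega]

theorem PowerSeries.coeff_pow_eq_sum_antidiagonal {k : ℕ} (hk : 2 ≤ k) {a : R} {T : R⟦X⟧}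
    (hT0 : constantCoeff T = 0) (hT : T = X + C a * T ^ k) (m s : ℕ) :
    coeff (s * (k - 1) + m) (T ^ m) =
      ∑ p ∈ antidiagonal s,
        a ^ p.1 * m.choose p.1 * coeff (p.2 * (k - 1) + k * p.1) (T ^ (k * p.1)) := by
  conv_lhs => rw [hT]
  rw [coeff_X_add_C_mul_pow, Finset.Nat.sum_antidiagonal_eq_sum_range_succ_mk]
  obtain ⟨l, rfl⟩ : ∃ l, k = l + 1 := ⟨k - 1, by omega⟩
  simp only [← pow_mul, Nat.add_sub_cancel]
  refine (sum_range_succ_eq_sum_range_succ_of_eq_zero (fun i hi ↦ ?_) (fun i hi ↦ ?_)).trans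
    (sum_congr rfl fun i hi ↦ ?_)
  · rw [Nat.choose_eq_zero_of_lt hi, Nat.cast_zero, mul_zero, zero_mul]
  · rw [coeff_pow_eq_zero_of_lt hT0, mul_zero]
    nlinarith
  · obtain ⟨j, rfl⟩ := Nat.exists_eq_add_of_le (Nat.lt_succ_iff.1 (mem_range.1 hi))
    rw [Nat.add_sub_cancel_left]
    congr 3
    ring

end

theorem PowerSeries.coeff_pow_eq_raney {k : ℕ} (hk : 2 ≤ k) {a : ℚ} {T : ℚ⟦X⟧}
    (hT0 : constantCoeff T = 0) (hT : T = X + C a * T ^ k) {m : ℕ} (hm : m ≠ 0) (s : ℕ) :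
    coeff (s * (k - 1) + m) (T ^ m) = raney k m s * a ^ s := by
  induction s using Nat.strong_induction_on generalizing m with
  | _ s ih =>
  have h0 : (0, s) ∈ antidiagonal s := by simp
  rw [coeff_pow_eq_sum_antidiagonal hk hT0 hT, raney_eq_ite_add_sum_antidiagonal (by omega) hm,
    add_mul, sum_mul, ← add_sum_erase _ _ h0, ← add_sum_erase _ _ h0]
  simp only [pow_zero, mul_zero, zero_add, coeff_one, raney_zero_left, zero_mul]
  congr 1
  · rcases eq_or_ne s 0 with rfl | hs <;> simp [*, show k - 1 ≠ 0 by omega]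
  refine sum_congr rfl fun p hp ↦ ?_
  obtain ⟨hp0, hps⟩ : p ≠ (0, s) ∧ p.1 + p.2 = s := by simpa using hp
  have hp1 : p.1 ≠ 0 := fun h ↦ hp0 (Prod.ext h (by omega))
  rw [ih p.2 (by omega) (mul_ne_zero (by omega) hp1), ← hps, pow_add]
  ring

/-- Let `k ≥ 2` and let `T` be the unique power series over `ℚ` with constant
coefficient `0` satisfying `T = X + T^k/k!`. For every nonnegative integer `s`,
with `n = s(k-1)+1`, the coefficient of `X^n` in `T` equals
`(1/(s(k-1)+1)) · C(ks, s) · (1/k!)^s`; equivalently, `n! · [X^n]T`, the number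
of `k`-phylogenetic trees on leaf set `[n]`, equals `(n!/(s(k-1)+1)) · C(ks,s) / k!^s`. -/
theorem phylo_tree_count (k : ℕ) (hk : 2 ≤ k) (T : PowerSeries ℚ)
    (hT0 : constantCoeff T = 0)
    (hT : T = X + C ((k.factorial : ℚ))⁻¹ * T ^ k)
    (s n : ℕ) (hn : n = s * (k - 1) + 1) :
    coeff n T =
      (1 / ((s : ℚ) * (k - 1) + 1)) * ((k * s).choose s : ℚ) *
        ((k.factorial : ℚ))⁻¹ ^ s ∧
    (n.factorial : ℚ) * coeff n T =
      ((n.factorial : ℚ) / ((s : ℚ) * (k - 1) + 1)) * ((k * s).choose s : ℚ) /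
        (k.factorial : ℚ) ^ s := by
  have hcoeff : coeff n T = (1 / ((s : ℚ) * (k - 1) + 1)) * ((k * s).choose s : ℚ) *
      ((k.factorial : ℚ))⁻¹ ^ s := by
    rw [hn, ← pow_one T, coeff_pow_eq_raney hk hT0 hT one_ne_zero, raney_one (by omega)]
  refine ⟨hcoeff, ?_⟩
  rw [hcoeff, inv_pow]
  ring
end

section
/- Let k ≥ 2 be an integer, let T = T_k be the unique formal power series over ℚ with constant coefficient 0 satisfying T = X + T^k/k!, let D = 1 − T^{k−1}/(k−1)!, and for each integer i ≥ 0 let M_i = (1/k!^{c_i}) · T^{k^i} · D⁻¹, where c_i = (k^i − 1)/(k − 1). Then for every fixed integer i ≥ 0, the ratio ([X^n] M_i − [X^n] M_{i+1}) / ([X^n] M_0) tends to P_{k,i} = 1/k^{c_i} − 1/k^{c_{i+1}} = 1/k^{c_i} − 1/k^{k·c_i + 1} as n tends to infinity along integers n with n ≡ 1 (mod k−1). -/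
open PowerSeries Filter Topology

/-! With `K = k - 1` and `a = 1/k!`, the relation `T = X + a T^(K+1)` gives the recurrences
`T^(m+1) D⁻¹ = X T^m D⁻¹ + a T^(m+K+1) D⁻¹` and `D⁻¹ = 1 + (K+1) a T^K D⁻¹`, which force the
Lagrange-inversion formula `[X^(m+jK)] T^m D⁻¹ = C(m+jK+j, j) a^j`. Since `k^i = K cᵢ + 1`, the
coefficients of all `Mᵢ` at `n = sK + 1` carry the same factor `a^s`, so the ratio becomes
`(C(N-cᵢ, s-cᵢ) - C(N-cᵢ₊₁, s-cᵢ₊₁)) / C(N, s)` with `N = sk + 1`; and `C(N-c, s-c) / C(N, s)` is a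
product of `c` factors `(s-t)/(N-t)`, each tending to `1/k`. -/

theorem PowerSeries.inv_one_sub_eq_one_add_mul_inv {𝕜 : Type*} [Field 𝕜] {G : 𝕜⟦X⟧}
    (hG : constantCoeff G = 0) : (1 - G)⁻¹ = 1 + G * (1 - G)⁻¹ := by
  have h := PowerSeries.mul_inv_cancel (1 - G) (by simp [hG])
  linear_combination h

theorem PowerSeries.coeff_pow_mul_eq_zero_of_lt {R : Type*} [CommSemiring R] {T : R⟦X⟧}
    (hT0 : constantCoeff T = 0) (F : R⟦X⟧) {m n : ℕ} (h : n < m) : coeff n (T ^ m * F) = 0 :=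
  X_pow_dvd_iff.mp ((pow_dvd_pow_of_dvd (X_dvd_iff.mpr hT0) m).mul_right F) n h

theorem Nat.choose_succ_mul_succ (K j : ℕ) :
    ((j + 1) * (K + 1)).choose (j + 1) = (K + 1) * (j * (K + 1) + K).choose j := by
  apply Nat.eq_of_mul_eq_mul_right (by omega : 0 < j + 1)
  have h := Nat.add_one_mul_choose_eq (j * (K + 1) + K) j
  rw [show j * (K + 1) + K + 1 = (j + 1) * (K + 1) by ring] at h
  rw [← h]; ring

theorem Nat.mul_div_pow_sub_one_add_one (K l : ℕ) :
    K * (((K + 1) ^ l - 1) / K) + 1 = (K + 1) ^ l := by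
  have h : K ∣ (K + 1) ^ l - 1 := by simpa using Nat.sub_dvd_pow_sub_pow (K + 1) 1 l
  rw [Nat.mul_div_cancel' h, Nat.sub_add_cancel (Nat.one_le_pow _ _ K.succ_pos)]

section
variable {𝕜 : Type*} [Field 𝕜] {K : ℕ} {a : 𝕜} {T : 𝕜⟦X⟧}

theorem coeff_pow_mul_inv_one_sub (hK : K ≠ 0) (hT0 : constantCoeff T = 0)
    (hT : T = X + C a * T ^ (K + 1)) (m j : ℕ) :
    coeff (m + j * K) (T ^ m * (1 - C ((K + 1) * a) * T ^ K)⁻¹) =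
      (m + j * K + j).choose j * a ^ j := by
  set D := 1 - C ((K + 1) * a) * T ^ K
  set f : ℕ → ℕ → 𝕜 := fun m n => coeff n (T ^ m * D⁻¹) with hf
  have hzero : ∀ {m n}, n < m → f m n = 0 := coeff_pow_mul_eq_zero_of_lt hT0 _
  have hstep : ∀ m n, f (m + 1) (n + 1) = f m n + a * f (m + K + 1) (n + 1) := by
    intro m n
    have : T ^ (m + 1) * D⁻¹ = X * (T ^ m * D⁻¹) + C a * (T ^ (m + K + 1) * D⁻¹) := calc
      T ^ (m + 1) * D⁻¹ = T ^ m * (X + C a * T ^ (K + 1)) * D⁻¹ := by rw [← hT, pow_succ]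
      _ = _ := by ring
    simp only [hf, this, map_add, coeff_succ_X_mul, coeff_C_mul]
  have hbase : ∀ n, f 0 n = (if n = 0 then 1 else 0) + (K + 1) * a * f K n := by
    intro n
    have : D⁻¹ = 1 + C ((K + 1) * a) * (T ^ K * D⁻¹) := by
      rw [← mul_assoc]; exact inv_one_sub_eq_one_add_mul_inv (by simp [hT0, hK])
    simp only [hf, pow_zero, one_mul]
    conv_lhs => rw [this]
    rw [map_add, coeff_one, coeff_C_mul]
  show f m (m + j * K) = _
  induction j using Nat.strong_induction_on generalizing m with
  | _ j ih =>
  induction m with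
  | zero =>
    rcases j with _ | j
    · simp [hbase, hzero (Nat.pos_of_ne_zero hK)]
    · rw [Nat.zero_add, hbase, if_neg (by positivity), zero_add,
        show (j + 1) * K = K + j * K by ring, ih j j.lt_add_one,
        show K + j * K + (j + 1) = (j + 1) * (K + 1) by ring,
        show K + j * K + j = j * (K + 1) + K by ring, Nat.choose_succ_mul_succ]
      push_cast; ring
  | succ m ihm =>
    rw [show m + 1 + j * K = m + j * K + 1 by ring, hstep, ihm]
    rcases j with _ | j
    · rw [hzero (by omega : m + 0 * K + 1 < m + K + 1)]; simp
    · rw [show m + (j + 1) * K + 1 = m + K + 1 + j * K by ring, ih j j.lt_add_one,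
        show m + K + 1 + j * K + (j + 1) = (m + K + 1 + j * K + j) + 1 by ring,
        Nat.choose_succ_succ', show m + (j + 1) * K + (j + 1) = m + K + 1 + j * K + j by ring]
      push_cast; ring

theorem coeff_C_pow_mul_pow_mul_inv_one_sub (hK : K ≠ 0) (hT0 : constantCoeff T = 0)
    (hT : T = X + C a * T ^ (K + 1)) {c s : ℕ} (hcs : c ≤ s) :
    coeff (s * K + 1) (C (a ^ c) * T ^ (K * c + 1) * (1 - C ((K + 1) * a) * T ^ K)⁻¹) =
      (s * K + 1 + (s - c)).choose (s - c) * a ^ s := by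
  obtain ⟨j, rfl⟩ := Nat.exists_eq_add_of_le hcs
  rw [mul_assoc, coeff_C_mul, show (c + j) * K + 1 = K * c + 1 + j * K by ring,
    coeff_pow_mul_inv_one_sub hK hT0 hT, Nat.add_sub_cancel_left,
    show K * c + 1 + j * K + j = (c + j) * K + 1 + j by ring, pow_add]
  ring
end

theorem tendsto_choose_sub_div_choose (K b c : ℕ) :
    Tendsto (fun s : ℕ => ((s * K + b + (s - c)).choose (s - c) : ℝ) / (s * K + b + s).choose s)
      atTop (𝓝 ((K + 1 : ℝ) ^ c)⁻¹) := by
  induction c with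
  | zero =>
    refine tendsto_const_nhds.congr fun s => ?_
    have : ((s * K + b + s).choose s : ℝ) ≠ 0 := by
      exact_mod_cast (Nat.choose_pos (by omega)).ne'
    simp [this]
  | succ c ih =>
    have hfactor := tendsto_add_mul_div_add_mul_atTop_nhds (-(c : ℝ)) (b - c) 1
      (d := (K + 1 : ℝ)) (by positivity)
    rw [one_div] at hfactor
    rw [pow_succ, mul_inv]
    refine (ih.mul hfactor).congr' ?_
    filter_upwards [eventually_gt_atTop c] with s hs
    have habsorb := Nat.add_one_mul_choose_eq (s * K + b + (s - (c + 1))) (s - (c + 1))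
    rw [show s * K + b + (s - (c + 1)) + 1 = s * K + b + (s - c) by omega,
      show s - (c + 1) + 1 = s - c by omega] at habsorb
    have hN : ((s * K + b + (s - c) : ℕ) : ℝ) ≠ 0 := by
      exact_mod_cast (show s * K + b + (s - c) ≠ 0 by omega)
    have habsorb' := congrArg (Nat.cast (R := ℝ)) habsorb
    push_cast [Nat.cast_sub hs.le] at habsorb' hN ⊢
    have hB : ((s * K + b + s).choose s : ℝ) ≠ 0 := by
      exact_mod_cast (Nat.choose_pos (by omega)).ne'
    rw [show (b : ℝ) - c + (K + 1) * s = s * K + b + (s - c) by ring, one_mul,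
      div_mul_div_comm, div_eq_div_iff (mul_ne_zero hB hN) hB]
    linear_combination -((s * K + b + s).choose s : ℝ) * habsorb'

/-- Let `k ≥ 2`, `T` the unique power series over `ℚ` with constant coefficient `0`
satisfying `T = X + T^k/k!`, `D = 1 - T^(k-1)/(k-1)!`, and
`Mᵢ = (1/k!^(cᵢ)) · T^(k^i) · D⁻¹` with `cᵢ = (k^i-1)/(k-1)`. Then for every fixed
`i ≥ 0`, the ratio `([X^n] Mᵢ - [X^n] Mᵢ₊₁)/([X^n] M₀)` tends to
`P_{k,i} = 1/k^(cᵢ) - 1/k^(cᵢ₊₁)` as `n → ∞` along integers `n ≡ 1 (mod k-1)`,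
i.e. along `n = s(k-1)+1` as `s → ∞`. -/
theorem phylo_rank_exactly_prob (k : ℕ) (hk : 2 ≤ k) (T : PowerSeries ℚ)
    (hT0 : constantCoeff T = 0)
    (hT : T = X + C ((k.factorial : ℚ))⁻¹ * T ^ k)
    (D : PowerSeries ℚ)
    (hD : D = 1 - C (((k - 1).factorial : ℚ))⁻¹ * T ^ (k - 1))
    (M : ℕ → PowerSeries ℚ)
    (hM : ∀ i : ℕ,
      M i = C (((k.factorial : ℚ) ^ ((k ^ i - 1) / (k - 1)))⁻¹) * T ^ (k ^ i) * D⁻¹)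
    (i : ℕ) :
    Filter.Tendsto
      (fun s : ℕ =>
        (((coeff (s * (k - 1) + 1) (M i) : ℚ) : ℝ) -
            ((coeff (s * (k - 1) + 1) (M (i + 1)) : ℚ) : ℝ)) /
          ((coeff (s * (k - 1) + 1) (M 0) : ℚ) : ℝ))
      Filter.atTop
      (nhds (((k : ℝ) ^ ((k ^ i - 1) / (k - 1)))⁻¹ -
        ((k : ℝ) ^ ((k ^ (i + 1) - 1) / (k - 1)))⁻¹)) := by
  obtain ⟨K, rfl⟩ : ∃ K, k = K + 1 := ⟨k - 1, by omega⟩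
  simp only [Nat.add_sub_cancel] at hD hM ⊢
  set a : ℚ := ((K + 1).factorial : ℚ)⁻¹
  have hD' : D = 1 - C ((K + 1) * a) * T ^ K := by
    rw [hD]; congr 3; simp only [a, Nat.factorial_succ]; push_cast; field_simp
  have hcoeff : ∀ l s, ((K + 1) ^ l - 1) / K ≤ s → coeff (s * K + 1) (M l) =
      (s * K + 1 + (s - ((K + 1) ^ l - 1) / K)).choose (s - ((K + 1) ^ l - 1) / K) * a ^ s := by
    intro l s hs
    have hpow := Nat.mul_div_pow_sub_one_add_one K l
    rw [hM l, ← inv_pow, hD']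
    generalize ((K + 1) ^ l - 1) / K = c at hs hpow ⊢
    rw [← hpow]
    exact coeff_C_pow_mul_pow_mul_inv_one_sub (by omega) hT0 hT hs
  have hlim := (tendsto_choose_sub_div_choose K 1 (((K + 1) ^ i - 1) / K)).sub
    (tendsto_choose_sub_div_choose K 1 (((K + 1) ^ (i + 1) - 1) / K))
  push_cast
  refine hlim.congr' ?_
  filter_upwards [eventually_ge_atTop (((K + 1) ^ i - 1) / K),
    eventually_ge_atTop (((K + 1) ^ (i + 1) - 1) / K)] with s hi hi'
  rw [hcoeff i s hi, hcoeff (i + 1) s hi', hcoeff 0 s (by simp)]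
  have ha : (a : ℝ) ^ s ≠ 0 := by positivity
  push_cast
  simp only [pow_zero, Nat.sub_self, Nat.zero_div, Nat.sub_zero]
  rw [← sub_mul, mul_div_mul_right _ _ ha, sub_div]
end
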